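/- Let m ≥ 1 be fixed and n ≥ m. Let H be the random n×m Toeplitz matrix built from i.i.d. Rademacher inputs. Fix z ∈ ℝ^m with ‖z‖₂ = 1, let ε > 0, and let K ⊆ {1,…,n} be an arbitrary fixed subset. Set S = n·E|Σ_{i=1}^m z_i ε_i| with ε₁,…,ε_m i.i.d. Rademacher. Then with probability at least 1 − 2e^{−ε² n² / (2(n+m−1)m)}, one has (|K|/n)·S − εn ≤ ‖(Hz)_K‖₁ ≤ (|K|/n)·S + εn. -/

import Mathlib

/-!
The product Rademacher measure on `ℝ^(n+m-1)` is the uniform measure on the sign vectors, so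
`F h = ‖(H z)_K‖₁` can be studied on the Boolean cube. Flipping one input changes `h` by `2` in
`ℓ¹`, and by Young's inequality `‖(H_u z)_K‖₁ ≤ ‖u‖₁ ‖z‖₁` for the Toeplitz matrix `H_u` of any
input `u`, this changes `F` by at most `2‖z‖₁ ≤ 2√m`. McDiarmid's inequality, proved on the cube by
iterating Hoeffding's two-point bound `cosh x ≤ exp (x²/2)`, bounds the probability that `F`
deviates from its mean by `εn` by `2 exp(-2(εn)²/(4(n+m-1)m))`. Each row of `H` reads `m` distinct
inputs, so each contributes `E|∑ zᵢεᵢ|` to the mean of `F`, which is therefore `(|K|/n)·S`.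
-/

open MeasureTheory ProbabilityTheory Finset Filter

noncomputable section

/-- The `n × m` Toeplitz matrix built from the input sequence
`h = (h_{-m+2}, …, h_n)`, reindexed as `h : Fin (n+m-1) → ℝ`;
the `(i,j)` entry (0-based) is the input with index `i + j`, which corresponds to
`H_{i,j} = h_{i-m+j}` in 1-based indexing. -/
def toeplitz (n m : ℕ) (h : Fin (n + m - 1) → ℝ) : Matrix (Fin n) (Fin m) ℝ :=
  fun i j => h ⟨i.1 + j.1, by have := i.2; have := j.2; omega⟩

/-- The ℓ¹ norm of a vector in `ℝ^k`. -/
def l1 {k : ℕ} (v : Fin k → ℝ) : ℝ := ∑ i, |v i|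

/-- The Euclidean (ℓ²) norm of a vector in `ℝ^k`. -/
def l2 {k : ℕ} (v : Fin k → ℝ) : ℝ := Real.sqrt (∑ i, (v i) ^ 2)

/-- The Rademacher measure on ℝ: values `+1` and `-1` with probability `1/2` each. -/
def radMeasure : Measure ℝ :=
  (2 : ENNReal)⁻¹ • Measure.dirac 1 + (2 : ENNReal)⁻¹ • Measure.dirac (-1)

/-- Product of `d` i.i.d. Rademacher measures on `ℝ^d`. -/
def radPi (d : ℕ) : Measure (Fin d → ℝ) := Measure.pi fun _ => radMeasure

open Classical in
/-- Number of nonzero entries of a vector. -/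
def sparsity {k : ℕ} (v : Fin k → ℝ) : ℕ := (Finset.univ.filter fun i => v i ≠ 0).card

lemma exp_add_exp_div_two_le (a b : ℝ) :
    (Real.exp a + Real.exp b) / 2 ≤ Real.exp ((a + b) / 2 + (a - b) ^ 2 / 8) := by
  have hcosh :
      (Real.exp a + Real.exp b) / 2 = Real.exp ((a + b) / 2) * Real.cosh ((a - b) / 2) := by
    rw [Real.cosh_eq, mul_div_assoc', mul_add, ← Real.exp_add, ← Real.exp_add]
    ring_nf
  rw [hcosh, Real.exp_add]
  gcongr
  calc Real.cosh ((a - b) / 2) ≤ Real.exp (((a - b) / 2) ^ 2 / 2) := Real.cosh_le_exp_half_sq _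
    _ = Real.exp ((a - b) ^ 2 / 8) := by ring_nf

lemma sum_pi_bool_comp_of_injective {ι κ : Type*} [Fintype ι] [Fintype κ] [DecidableEq ι]
    [DecidableEq κ] {σ : κ → ι} (hσ : Function.Injective σ) (g : (κ → Bool) → ℝ) :
    ∑ s : ι → Bool, g (s ∘ σ) = 2 ^ (Fintype.card ι - Fintype.card κ) * ∑ t, g t := by
  let e : κ ≃ Set.range σ := Equiv.ofInjective σ hσ
  have hsplit : ∑ s : ι → Bool, g (s ∘ σ) =
      ∑ u : Set.range σ → Bool, ∑ _r : {x // x ∉ Set.range σ} → Bool, g (u ∘ e) := by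
    rw [← Fintype.sum_prod_type',
      ← (Equiv.piEquivPiSubtypeProd (· ∈ Set.range σ) fun _ => Bool).sum_comp]
    rfl
  have hcompl : Fintype.card {x // x ∉ Set.range σ} = Fintype.card ι - Fintype.card κ := by
    rw [Fintype.card_subtype_compl, Fintype.card_congr e.symm]
  rw [hsplit]
  simp only [Finset.sum_const, Finset.card_univ, Fintype.card_fun, Fintype.card_bool, hcompl,
    nsmul_eq_mul, Nat.cast_pow, Nat.cast_ofNat, ← Finset.mul_sum]
  congr 1
  exact (e.arrowCongr (Equiv.refl Bool)).symm.sum_comp g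

namespace BoolCube

def mean {d : ℕ} (f : (Fin d → Bool) → ℝ) : ℝ := (∑ s, f s) / 2 ^ d

def HasBoundedDifferences {d : ℕ} (f : (Fin d → Bool) → ℝ) (c : Fin d → ℝ) : Prop :=
  ∀ k s s', (∀ j ≠ k, s j = s' j) → |f s - f s'| ≤ c k

lemma sum_succ {d : ℕ} (f : (Fin (d + 1) → Bool) → ℝ) :
    ∑ s, f s = ∑ t, f (Fin.cons true t) + ∑ t, f (Fin.cons false t) := by
  rw [← (Fin.consEquiv fun _ => Bool).sum_comp, Fintype.sum_prod_type, Fintype.sum_bool]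
  rfl

lemma mean_succ {d : ℕ} (f : (Fin (d + 1) → Bool) → ℝ) :
    mean f = (mean (fun t => f (Fin.cons true t)) + mean (fun t => f (Fin.cons false t))) / 2 := by
  simp only [mean, sum_succ, pow_succ]
  ring

lemma mean_neg {d : ℕ} (f : (Fin d → Bool) → ℝ) : mean (fun s => -f s) = -mean f := by
  simp only [mean, Finset.sum_neg_distrib, neg_div]

lemma mean_finset_sum {d : ℕ} {ι : Type*} (K : Finset ι) (f : ι → (Fin d → Bool) → ℝ) :
    mean (fun s => ∑ i ∈ K, f i s) = ∑ i ∈ K, mean (f i) := by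
  simp only [mean, Finset.sum_comm (s := K), Finset.sum_div]

lemma abs_mean_le {d : ℕ} {f : (Fin d → Bool) → ℝ} {C : ℝ} (hf : ∀ s, |f s| ≤ C) :
    |mean f| ≤ C := by
  rw [mean, abs_div, abs_of_pos (by positivity : (0 : ℝ) < 2 ^ d), div_le_iff₀ (by positivity)]
  calc |∑ s, f s| ≤ ∑ s, |f s| := Finset.abs_sum_le_sum_abs _ _
    _ ≤ ∑ _s : Fin d → Bool, C := Finset.sum_le_sum fun s _ => hf s
    _ = C * 2 ^ d := by simp [mul_comm]

lemma mean_comp_injective {m d : ℕ} {σ : Fin m → Fin d} (hσ : Function.Injective σ)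
    (g : (Fin m → Bool) → ℝ) : mean (fun s => g (s ∘ σ)) = mean g := by
  have hmd : m ≤ d := by simpa using Fintype.card_le_of_injective σ hσ
  rw [mean, mean, sum_pi_bool_comp_of_injective hσ, Fintype.card_fin, Fintype.card_fin,
    ← Nat.sub_add_cancel hmd, pow_add, Nat.add_sub_cancel]
  field_simp

namespace HasBoundedDifferences

variable {d : ℕ} {f : (Fin d → Bool) → ℝ} {c : Fin d → ℝ}

lemma neg (hf : HasBoundedDifferences f c) : HasBoundedDifferences (fun s => -f s) c :=
  fun k s s' h => by
    rw [neg_sub_neg, abs_sub_comm]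
    exact hf k s s' h

lemma cons {f : (Fin (d + 1) → Bool) → ℝ} {c : Fin (d + 1) → ℝ}
    (hf : HasBoundedDifferences f c) (b : Bool) :
    HasBoundedDifferences (fun t => f (Fin.cons b t)) (fun k => c k.succ) := by
  intro k t t' h
  refine hf k.succ _ _ fun j hj => ?_
  cases j using Fin.cases with
  | zero => rfl
  | succ i => exact h i (fun hik => hj (hik ▸ rfl))

lemma abs_mean_cons_sub_le {f : (Fin (d + 1) → Bool) → ℝ} {c : Fin (d + 1) → ℝ}
    (hf : HasBoundedDifferences f c) :
    |mean (fun t => f (Fin.cons true t)) - mean (fun t => f (Fin.cons false t))| ≤ c 0 := by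
  have hsub : mean (fun t => f (Fin.cons true t)) - mean (fun t => f (Fin.cons false t)) =
      mean (fun t => f (Fin.cons true t) - f (Fin.cons false t)) := by
    simp only [mean, Finset.sum_sub_distrib, sub_div]
  rw [hsub]
  refine abs_mean_le fun t => hf 0 _ _ fun j hj => ?_
  cases j using Fin.cases with
  | zero => exact absurd rfl hj
  | succ i => rfl

theorem mean_exp_le (hf : HasBoundedDifferences f c) (l : ℝ) :
    mean (fun s => Real.exp (l * f s)) ≤ Real.exp (l * mean f + l ^ 2 * (∑ k, c k ^ 2) / 8) := by
  induction d with
  | zero => simp [mean, Finset.univ_unique]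
  | succ d ih =>
    -- Condition on the first coordinate; the two conditional means differ by at most `c 0`.
    set gT := mean fun t => f (Fin.cons true t) with hgT
    set gF := mean fun t => f (Fin.cons false t) with hgF
    set V := ∑ k : Fin d, c k.succ ^ 2 with hV
    have hsq : (l * gT - l * gF) ^ 2 ≤ l ^ 2 * c 0 ^ 2 := by
      rw [← mul_sub, mul_pow, ← sq_abs (gT - gF)]
      gcongr
      exact hf.abs_mean_cons_sub_le
    calc mean (fun s => Real.exp (l * f s))
        ≤ (Real.exp (l * gT + l ^ 2 * V / 8) + Real.exp (l * gF + l ^ 2 * V / 8)) / 2 := by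
          rw [mean_succ]
          gcongr
          · exact ih (hf.cons true)
          · exact ih (hf.cons false)
      _ = Real.exp (l ^ 2 * V / 8) * ((Real.exp (l * gT) + Real.exp (l * gF)) / 2) := by
          simp only [Real.exp_add]; ring
      _ ≤ Real.exp (l ^ 2 * V / 8) *
            Real.exp ((l * gT + l * gF) / 2 + (l * gT - l * gF) ^ 2 / 8) := by
          gcongr; exact exp_add_exp_div_two_le _ _
      _ ≤ Real.exp (l ^ 2 * V / 8) *
            Real.exp ((l * gT + l * gF) / 2 + l ^ 2 * c 0 ^ 2 / 8) := by
          gcongr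
      _ = Real.exp (l * mean f + l ^ 2 * (∑ k, c k ^ 2) / 8) := by
          rw [← Real.exp_add, mean_succ, Fin.sum_univ_succ, ← hgT, ← hgF, ← hV]
          congr 1; ring

theorem card_mean_add_le_le (hf : HasBoundedDifferences f c) {t V : ℝ} (ht : 0 ≤ t) (hV : 0 < V)
    (hcV : ∑ k, c k ^ 2 ≤ V) :
    (#{s | mean f + t ≤ f s} : ℝ) ≤ 2 ^ d * Real.exp (-2 * t ^ 2 / V) := by
  -- Markov's inequality for `exp (l * f)`, with the optimal `l`.
  set l := 4 * t / V with hl_def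
  have hl : 0 ≤ l := by positivity
  calc (#{s | mean f + t ≤ f s} : ℝ)
      ≤ ∑ s, Real.exp (l * (f s - (mean f + t))) := by
        rw [Finset.natCast_card_filter]
        refine Finset.sum_le_sum fun s _ => ?_
        split_ifs with hs
        · exact Real.one_le_exp (mul_nonneg hl (sub_nonneg.2 hs))
        · positivity
    _ = 2 ^ d * mean (fun s => Real.exp (l * f s)) * Real.exp (-(l * (mean f + t))) := by
        rw [show (2 : ℝ) ^ d * mean (fun s => Real.exp (l * f s)) = ∑ s, Real.exp (l * f s) from
          mul_div_cancel₀ _ (by positivity), Finset.sum_mul]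
        refine Finset.sum_congr rfl fun s _ => ?_
        rw [← Real.exp_add]
        ring_nf
    _ ≤ 2 ^ d * Real.exp (l * mean f + l ^ 2 * (∑ k, c k ^ 2) / 8) *
          Real.exp (-(l * (mean f + t))) := by
        gcongr
        exact hf.mean_exp_le l
    _ ≤ 2 ^ d * Real.exp (l * mean f + l ^ 2 * V / 8) * Real.exp (-(l * (mean f + t))) := by
        gcongr
    _ = 2 ^ d * Real.exp (-2 * t ^ 2 / V) := by
        rw [mul_assoc, ← Real.exp_add]
        congr 2
        rw [hl_def]
        field_simp
        ring

open Classical in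
theorem one_sub_two_mul_exp_le_card_div (hf : HasBoundedDifferences f c) {t V : ℝ} (ht : 0 ≤ t)
    (hV : 0 < V) (hcV : ∑ k, c k ^ 2 ≤ V) :
    1 - 2 * Real.exp (-2 * t ^ 2 / V) ≤
      (#{s | mean f - t ≤ f s ∧ f s ≤ mean f + t} : ℝ) / 2 ^ d := by
  have hupper := hf.card_mean_add_le_le ht hV hcV
  have hlower := hf.neg.card_mean_add_le_le ht hV hcV
  have hcover : (Finset.univ : Finset (Fin d → Bool)) ⊆
      Finset.univ.filter (fun s => mean f - t ≤ f s ∧ f s ≤ mean f + t) ∪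
        (Finset.univ.filter (fun s => mean f + t ≤ f s) ∪
          Finset.univ.filter (fun s => mean (fun s => -f s) + t ≤ -f s)) := by
    intro s _
    simp only [Finset.mem_union, Finset.mem_filter, Finset.mem_univ, true_and, mean_neg]
    by_contra! h
    linarith [h.1 (by linarith [h.2.1]), h.2.1, h.2.2]
  have hcard := (Finset.card_le_card hcover).trans
    ((Finset.card_union_le _ _).trans (add_le_add_right (Finset.card_union_le _ _) _))
  rw [Finset.card_univ, Fintype.card_fun, Fintype.card_bool, Fintype.card_fin] at hcard
  have hcardℝ := (Nat.cast_le (α := ℝ)).2 hcard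
  push_cast at hcardℝ
  rw [le_div_iff₀ (by positivity)]
  linarith

end HasBoundedDifferences

end BoolCube

def signOf (b : Bool) : ℝ := if b then 1 else -1

def signVec {d : ℕ} (s : Fin d → Bool) : Fin d → ℝ := fun i => signOf (s i)

lemma abs_signOf_sub_signOf_le (a b : Bool) : |signOf a - signOf b| ≤ 2 := by
  cases a <;> cases b <;> norm_num [signOf]

lemma radMeasure_eq_sum_dirac :
    radMeasure = (2 : ENNReal)⁻¹ • ∑ b : Bool, Measure.dirac (signOf b) := by
  simp [radMeasure, signOf, smul_add]

instance : IsProbabilityMeasure radMeasure :=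
  ⟨by simp [radMeasure, ENNReal.inv_two_add_inv_two]⟩

lemma radPi_eq_sum_dirac (d : ℕ) :
    radPi d = ((2 : ENNReal) ^ d)⁻¹ • ∑ s : Fin d → Bool, Measure.dirac (signVec s) := by
  refine Measure.pi_eq fun t _ => ?_
  have hbox (x : Fin d → ℝ) :
      Measure.dirac x (Set.univ.pi t) = ∏ i, Measure.dirac (x i) (t i) := by
    simp [← Finset.coe_univ]
  simp only [radMeasure_eq_sum_dirac, Measure.smul_apply, Measure.finsetSum_apply, smul_eq_mul,
    Finset.prod_mul_distrib, hbox, signVec, Finset.prod_const, Finset.card_univ, Fintype.card_fin,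
    ENNReal.inv_pow]
  rw [Finset.prod_univ_sum, Fintype.piFinset_univ]

lemma integral_radPi (d : ℕ) (f : (Fin d → ℝ) → ℝ) :
    ∫ a, f a ∂radPi d = BoolCube.mean (fun s => f (signVec s)) := by
  rw [radPi_eq_sum_dirac, integral_smul_measure,
    integral_finsetSum_measure fun s _ => integrable_dirac enorm_lt_top]
  simp [integral_dirac, BoolCube.mean, div_eq_inv_mul]

open Classical in
lemma radPi_apply (d : ℕ) (E : Set (Fin d → ℝ)) :
    radPi d E = #{s | signVec s ∈ E} / 2 ^ d := by
  rw [radPi_eq_sum_dirac, Measure.smul_apply, Measure.finsetSum_apply, smul_eq_mul]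
  simp [Measure.dirac_apply, Set.indicator_apply, Finset.sum_boole, ENNReal.div_eq_inv_mul]

lemma l1_signVec_sub_le {d : ℕ} {s s' : Fin d → Bool} {k : Fin d} (h : ∀ j ≠ k, s j = s' j) :
    l1 (signVec s - signVec s') ≤ 2 := by
  rw [l1, Finset.sum_eq_single k (fun j _ hj => by simp [signVec, h j hj]) (by simp)]
  exact abs_signOf_sub_signOf_le _ _

lemma l1_sq_le_card_mul_l2_sq {k : ℕ} (v : Fin k → ℝ) : l1 v ^ 2 ≤ k * l2 v ^ 2 := by
  rw [l2, Real.sq_sqrt (Finset.sum_nonneg fun i _ => sq_nonneg _)]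
  simpa [l1, sq_abs] using sq_sum_le_card_mul_sum_sq (s := Finset.univ) (f := fun i => |v i|)

section Toeplitz

variable {n m : ℕ}

def toeplitzIdx (i : Fin n) (j : Fin m) : Fin (n + m - 1) := ⟨i + j, by omega⟩

lemma toeplitz_apply (h : Fin (n + m - 1) → ℝ) (i : Fin n) (j : Fin m) :
    toeplitz n m h i j = h (toeplitzIdx i j) := rfl

lemma toeplitzIdx_injective_left (j : Fin m) :
    Function.Injective fun i : Fin n => toeplitzIdx i j :=
  fun _ _ h => Fin.ext (by simpa [toeplitzIdx] using h)

lemma toeplitzIdx_injective_right (i : Fin n) :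
    Function.Injective (toeplitzIdx (m := m) i) :=
  fun _ _ h => Fin.ext (by simpa [toeplitzIdx] using h)

lemma toeplitz_sub (h h' : Fin (n + m - 1) → ℝ) :
    toeplitz n m (h - h') = toeplitz n m h - toeplitz n m h' := rfl

def toeplitzL1 (K : Finset (Fin n)) (z : Fin m → ℝ) (h : Fin (n + m - 1) → ℝ) : ℝ :=
  ∑ i ∈ K, |((toeplitz n m h).mulVec z) i|

lemma toeplitzL1_le (K : Finset (Fin n)) (z : Fin m → ℝ) (u : Fin (n + m - 1) → ℝ) :
    toeplitzL1 K z u ≤ l1 u * l1 z := by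
  have hcol (j : Fin m) : ∑ i : Fin n, |u (toeplitzIdx i j)| ≤ l1 u := by
    rw [← Finset.sum_image (f := fun k => |u k|) fun _ _ _ _ h => toeplitzIdx_injective_left j h]
    exact Finset.sum_le_univ_sum_of_nonneg fun _ => abs_nonneg _
  calc toeplitzL1 K z u ≤ ∑ i, |((toeplitz n m u).mulVec z) i| :=
        Finset.sum_le_univ_sum_of_nonneg fun _ => abs_nonneg _
    _ ≤ ∑ i, ∑ j, |u (toeplitzIdx i j)| * |z j| := by
        gcongr with i
        simp only [Matrix.mulVec, dotProduct, toeplitz_apply, ← abs_mul]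
        exact Finset.abs_sum_le_sum_abs _ _
    _ = ∑ j, (∑ i, |u (toeplitzIdx i j)|) * |z j| := by
        rw [Finset.sum_comm]; simp only [Finset.sum_mul]
    _ ≤ ∑ j, l1 u * |z j| := by gcongr with j; exact hcol j
    _ = l1 u * l1 z := (Finset.mul_sum _ _ _).symm

lemma abs_toeplitzL1_sub_le (K : Finset (Fin n)) (z : Fin m → ℝ) (h h' : Fin (n + m - 1) → ℝ) :
    |toeplitzL1 K z h - toeplitzL1 K z h'| ≤ l1 (h - h') * l1 z := by
  refine le_trans ?_ (toeplitzL1_le K z (h - h'))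
  rw [toeplitzL1, toeplitzL1, ← Finset.sum_sub_distrib]
  refine (Finset.abs_sum_le_sum_abs _ _).trans (Finset.sum_le_sum fun i _ => ?_)
  rw [toeplitz_sub, Matrix.sub_mulVec, Pi.sub_apply]
  exact abs_abs_sub_abs_le_abs_sub _ _

lemma hasBoundedDifferences_toeplitzL1 (K : Finset (Fin n)) (z : Fin m → ℝ) :
    BoolCube.HasBoundedDifferences (fun s => toeplitzL1 K z (signVec s)) fun _ => 2 * l1 z :=
  fun _ _ _ h => (abs_toeplitzL1_sub_le K z _ _).trans
    (mul_le_mul_of_nonneg_right (l1_signVec_sub_le h) (Finset.sum_nonneg fun _ _ => abs_nonneg _))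

lemma mean_toeplitzL1 (K : Finset (Fin n)) (z : Fin m → ℝ) :
    BoolCube.mean (fun s => toeplitzL1 K z (signVec s)) =
      K.card * ∫ a, |∑ j, z j * a j| ∂radPi m := by
  have hrow (i : Fin n) (s : Fin (n + m - 1) → Bool) :
      |((toeplitz n m (signVec s)).mulVec z) i| = |∑ j, z j * signVec (s ∘ toeplitzIdx i) j| := by
    simp only [Matrix.mulVec, dotProduct, toeplitz_apply, mul_comm]; rfl
  simp only [toeplitzL1, hrow, BoolCube.mean_finset_sum,
    BoolCube.mean_comp_injective (toeplitzIdx_injective_right _)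
      (fun t => |∑ j, z j * signVec t j|),
    Finset.sum_const, nsmul_eq_mul, integral_radPi]

end Toeplitz

/-- McDiarmid-type concentration of `‖(Hz)_K‖₁` for the Rademacher
Toeplitz matrix, a fixed unit vector `z` and a fixed subset `K`, around `(|K|/n)·S`
with `S = n·E|∑ zᵢεᵢ|`: the two-sided bound holds with probability at least
`1 - 2e^{-ε²n²/(2(n+m-1)m)}`. -/
theorem stmt9 (m n : ℕ) (hm : 1 ≤ m) (hmn : m ≤ n)
    (z : Fin m → ℝ) (hz : l2 z = 1) (ε : ℝ) (hε : 0 < ε) (K : Finset (Fin n)) :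
    ENNReal.ofReal
        (1 - 2 * Real.exp (-(ε ^ 2 * (n : ℝ) ^ 2) / (2 * ((n : ℝ) + m - 1) * m))) ≤
      radPi (n + m - 1)
        {h | ((K.card : ℝ) / n) * ((n : ℝ) * (∫ a, |∑ i, z i * a i| ∂ radPi m))
              - ε * n ≤ ∑ i ∈ K, |(toeplitz n m h).mulVec z i| ∧
            ∑ i ∈ K, |(toeplitz n m h).mulVec z i| ≤
              ((K.card : ℝ) / n) * ((n : ℝ) * (∫ a, |∑ i, z i * a i| ∂ radPi m))
                + ε * n} := by
  set d := n + m - 1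
  have hd : (d : ℝ) = n + m - 1 := by rw [Nat.cast_sub (by omega)]; push_cast; ring
  have hn : (n : ℝ) ≠ 0 := by norm_cast; omega
  have hd_pos : 0 < d := by omega
  have hcenter : (K.card : ℝ) / n * (n * ∫ a, |∑ i, z i * a i| ∂radPi m) =
      BoolCube.mean (fun s => toeplitzL1 K z (signVec s)) := by
    rw [mean_toeplitzL1]; field_simp
  have hcV : ∑ _k : Fin d, (2 * l1 z) ^ 2 ≤ 4 * (d : ℝ) * m := by
    have := l1_sq_le_card_mul_l2_sq z
    rw [hz] at this
    simp only [Finset.sum_const, Finset.card_univ, Fintype.card_fin, nsmul_eq_mul, mul_pow]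
    nlinarith
  have hexp : -(ε ^ 2 * (n : ℝ) ^ 2) / (2 * ((n : ℝ) + m - 1) * m) =
      -2 * (ε * n) ^ 2 / (4 * d * m) := by
    rw [hd]; field_simp; ring
  have hconc := (hasBoundedDifferences_toeplitzL1 K z).one_sub_two_mul_exp_le_card_div
    (t := ε * n) (by positivity) (by positivity) hcV
  rw [hexp, hcenter, radPi_apply]
  refine (ENNReal.ofReal_le_ofReal hconc).trans_eq ?_
  rw [ENNReal.ofReal_div_of_pos (by positivity), ENNReal.ofReal_natCast,
    ENNReal.ofReal_pow zero_le_two, ENNReal.ofReal_ofNat]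
  congr!
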